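/- Let R be a ring and let {A_i : i ∈ I} and {B_j : j ∈ J} be two countable families of slender biuniform right R-modules. If the direct products ∏_{i∈I} A_i and ∏_{j∈J} B_j are isomorphic R-modules, then there exist bijections σ, τ : I → J such that A_i and B_{σ(i)} belong to the same monogeny class and A_i and B_{τ(i)} belong to the same epigeny class for every i ∈ I. -/

import Mathlib

/-- Two modules belong to the same monogeny class if there are injective homomorphisms
in both directions. -/
def SameMonogenyClass (R : Type*) [Ring R] (M N : Type*) [AddCommGroup M] [Module R M]
    [AddCommGroup N] [Module R N] : Prop :=
  (∃ f : M →ₗ[R] N, Function.Injective f) ∧ ∃ g : N →ₗ[R] M, Function.Injective g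

/-- Two modules belong to the same epigeny class if there are surjective homomorphisms
in both directions. -/
def SameEpigenyClass (R : Type*) [Ring R] (M N : Type*) [AddCommGroup M] [Module R M]
    [AddCommGroup N] [Module R N] : Prop :=
  (∃ f : M →ₗ[R] N, Function.Surjective f) ∧ ∃ g : N →ₗ[R] M, Function.Surjective g

/-- A module is uniform if it is nonzero and any two nonzero submodules intersect
nontrivially. -/
def IsUniformModule (R : Type*) [Ring R] (M : Type*) [AddCommGroup M] [Module R M] : Prop :=
  (∃ x : M, x ≠ 0) ∧ ∀ N P : Submodule R M, N ≠ ⊥ → P ≠ ⊥ → N ⊓ P ≠ ⊥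

/-- A module is couniform (hollow) if it is nonzero and the sum of any two proper
submodules is proper. -/
def IsCouniformModule (R : Type*) [Ring R] (M : Type*) [AddCommGroup M] [Module R M] : Prop :=
  (∃ x : M, x ≠ 0) ∧ ∀ N P : Submodule R M, N ≠ ⊤ → P ≠ ⊤ → N ⊔ P ≠ ⊤

/-- A module is biuniform if it is both uniform and couniform. -/
def IsBiuniformModule (R : Type*) [Ring R] (M : Type*) [AddCommGroup M] [Module R M] : Prop :=
  IsUniformModule R M ∧ IsCouniformModule R M

/-- A module `M` is slender if every homomorphism `f : R^ω → M` from the countable direct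
product of copies of `R` kills almost all of the canonical unit vectors `eₙ`. -/
def IsSlender (R : Type*) [Ring R] (M : Type*) [AddCommGroup M] [Module R M] : Prop :=
  ∀ f : (ℕ → R) →ₗ[R] M, ∃ n₀ : ℕ, ∀ n ≥ n₀, f (Pi.single n 1) = 0

/-!
Both bijections are built class by class. Fix a class and a finite set `S` of indices `i` with
`A i` in it. By slenderness every row of the matrix of `φ⁻¹` has finite support; let `T` be the
indices `j` with `B j` in the class that occur in the rows of `S`. For the blocks
`Φ : ∏_S A → ∏_T B` of `φ` and `Ψ : ∏_T B → ∏_S A` of `φ⁻¹`, every entry of `1 - ΨΦ` is a finite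
sum of composites `A b → B j → A a` through modules `B j` outside the class, hence not injective
(resp. not surjective). For uniform (resp. couniform) modules this forces `ΨΦ` to be injective
(resp. surjective), so `Φ` is injective (resp. `Ψ` surjective), and counting independent uniform
elements in the lattice of submodules (resp. its dual) gives `|S| ≤ |T|`. By symmetry and
countability each class then has equally many members on both sides.
-/

open Finset Function OrderDual

section UniformElement

variable {L ι κ : Type*} [Lattice L]

def IsUniformElement [OrderBot L] (x : L) : Prop :=
  x ≠ ⊥ ∧ ∀ ⦃y z : L⦄, y ≤ x → z ≤ x → y ≠ ⊥ → z ≠ ⊥ → y ⊓ z ≠ ⊥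

theorem IsUniformElement.inf_finset_inf_ne_bot [BoundedOrder L] {x : L}
    (hx : IsUniformElement x) (s : Finset ι) (w : ι → L) (hw : ∀ i ∈ s, x ⊓ w i ≠ ⊥) :
    x ⊓ s.inf w ≠ ⊥ := by
  classical
  induction s using Finset.induction_on with
  | empty => simpa using hx.1
  | insert a s _ ih =>
    rw [inf_insert, inf_inf_distrib_left]
    exact hx.2 inf_le_left inf_le_left (hw a (mem_insert_self a s))
      (ih fun i hi => hw i (mem_insert_of_mem hi))

variable [IsModularLattice L]

theorem Finset.SupIndep.eq_bot_of_le_sup_erase [OrderBot L] [DecidableEq κ] {s : Finset κ}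
    {v : κ → L} (hs : s.SupIndep v) {x : L} (hxs : x ≤ s.sup v)
    (hx : ∀ a ∈ s, x ≤ (s.erase a).sup v) : x = ⊥ := by
  induction s using Finset.induction_on generalizing x with
  | empty => simpa using hxs
  | insert a s ha ih =>
    have hva : Disjoint (v a) (s.sup v) := hs (subset_insert a s) (mem_insert_self a s) ha
    have hxs' : x ≤ s.sup v := by simpa [erase_insert ha] using hx a (mem_insert_self a s)
    refine ih (hs.subset (subset_insert a s)) hxs' fun b hb => ?_
    have hab : a ≠ b := fun h => ha (h ▸ hb)
    have hxb : x ≤ (s.erase b).sup v ⊔ v a := by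
      simpa [erase_insert_of_ne hab, sup_comm] using hx b (mem_insert_of_mem hb)
    calc x ≤ ((s.erase b).sup v ⊔ v a) ⊓ s.sup v := le_inf hxb hxs'
      _ = (s.erase b).sup v := by
        rw [sup_inf_assoc_of_le _ (sup_mono (erase_subset b s)), hva.eq_bot, sup_bot_eq]

theorem IsUniformElement.exists_disjoint_sup_erase [BoundedOrder L] [DecidableEq κ] {U : L}
    (hU : IsUniformElement U) {s : Finset κ} (hne : s.Nonempty) {v : κ → L}
    (hs : s.SupIndep v) : ∃ a ∈ s, Disjoint U ((s.erase a).sup v) := by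
  by_contra! h
  obtain ⟨a, ha⟩ := hne
  refine hU.inf_finset_inf_ne_bot s (fun a => (s.erase a).sup v)
    (fun b hb => mt disjoint_iff.2 (h b hb)) (hs.eq_bot_of_le_sup_erase ?_ fun b hb => ?_)
  · exact inf_le_right.trans ((inf_le ha).trans (sup_mono (erase_subset a s)))
  · exact inf_le_right.trans (inf_le hb)

theorem disjoint_sup_inf_sup_inf [OrderBot L] {U W p q : L} (hUW : Disjoint U W)
    (hpq : Disjoint p (q ⊔ U)) : Disjoint ((p ⊔ U) ⊓ W) ((q ⊔ U) ⊓ W) := by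
  have hU : (p ⊔ U) ⊓ (q ⊔ U) = U := by
    rw [sup_comm p, sup_inf_assoc_of_le p le_sup_right, hpq.eq_bot, sup_bot_eq]
  rw [disjoint_iff_inf_le, ← hUW.eq_bot]
  calc (p ⊔ U) ⊓ W ⊓ ((q ⊔ U) ⊓ W) ≤ (p ⊔ U) ⊓ (q ⊔ U) ⊓ W :=
        le_inf (le_inf (inf_le_left.trans inf_le_left) (inf_le_right.trans inf_le_left))
          (inf_le_left.trans inf_le_right)
    _ = U ⊓ W := by rw [hU]

theorem Finset.SupIndep.sup_inf_of_disjoint [OrderBot L] [DecidableEq κ] {U W : L}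
    (hUW : Disjoint U W) {s : Finset κ} {v : κ → L} (hs : s.SupIndep v)
    (hU : Disjoint U (s.sup v)) : s.SupIndep fun a => (v a ⊔ U) ⊓ W := by
  rw [supIndep_iff_disjoint_erase] at hs ⊢
  intro a ha
  have hva : Disjoint (v a) ((s.erase a).sup v ⊔ U) :=
    (hs a ha).disjoint_sup_right_of_disjoint_sup_left
      (hU.symm.mono_left (sup_le (le_sup ha) (sup_mono (erase_subset a s))))
  refine (disjoint_sup_inf_sup_inf hUW hva).mono_right (Finset.sup_le fun b hb => ?_)
  exact inf_le_inf_right W (sup_le_sup_right (le_sup hb) U)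

theorem sup_inf_ne_bot_of_disjoint [OrderBot L] {U W p : L}
    (hp : p ≤ U ⊔ W) (hpU : Disjoint p U) (hp0 : p ≠ ⊥) : (p ⊔ U) ⊓ W ≠ ⊥ := by
  intro h
  have hpU' : p ⊔ U = U := by
    rw [← inf_eq_right.2 (sup_le hp le_sup_left), sup_inf_assoc_of_le W le_sup_right,
      inf_comm, h, sup_bot_eq]
  exact hp0 (hpU.eq_bot_of_le (sup_eq_right.1 hpU'))

theorem Finset.SupIndep.card_le_card_of_sup_le [BoundedOrder L] [DecidableEq ι] [DecidableEq κ]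
    {t : Finset ι} {u : ι → L} (ht : t.SupIndep u) (hu : ∀ b ∈ t, IsUniformElement (u b))
    {s : Finset κ} {v : κ → L} (hs : s.SupIndep v) (hv : ∀ a ∈ s, v a ≠ ⊥)
    (hsup : s.sup v ≤ t.sup u) : #s ≤ #t := by
  induction t using Finset.induction_on generalizing s v with
  | empty =>
    simpa [eq_empty_iff_forall_notMem] using fun a ha => hv a ha (le_bot_iff.1
      ((le_sup ha).trans (by simpa using hsup)))
  | insert b t hb ih =>
    rcases s.eq_empty_or_nonempty with rfl | hne
    · simp
    have hUW : Disjoint (u b) (t.sup u) := ht (subset_insert b t) (mem_insert_self b t) hb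
    -- `u b` misses the join of all `v` but one; projecting the others along `u b` onto
    -- `t.sup u` keeps them independent and nonzero.
    obtain ⟨a, ha, hUa⟩ := (hu b (mem_insert_self b t)).exists_disjoint_sup_erase hne hs
    have hcard := ih (ht.subset (subset_insert b t)) (fun c hc => hu c (mem_insert_of_mem hc))
      ((hs.subset (erase_subset a s)).sup_inf_of_disjoint hUW hUa)
      (fun c hc => sup_inf_ne_bot_of_disjoint
        (((le_sup (mem_of_mem_erase hc)).trans hsup).trans_eq (sup_insert ..))
        (hUa.symm.mono_left (le_sup hc)) (hv c (mem_of_mem_erase hc)))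
      (Finset.sup_le fun _ _ => inf_le_right)
    rw [card_insert_of_notMem hb, ← card_erase_add_one ha]
    omega

end UniformElement

section UniformModules

variable {R : Type*} [Ring R] {ι M N P : Type*} [AddCommGroup M] [Module R M]
  [AddCommGroup N] [Module R N] [AddCommGroup P] [Module R P]

theorem IsUniformModule.isUniformElement_range (hN : IsUniformModule R N) {f : N →ₗ[R] M}
    (hf : Injective f) : IsUniformElement (LinearMap.range f) := by
  have hcomap : ∀ y ≤ LinearMap.range f, y ≠ ⊥ → y.comap f ≠ ⊥ := fun y hy hy0 h =>
    hy0 (by rw [← Submodule.map_comap_eq_self hy, h, Submodule.map_bot])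
  refine ⟨fun h => ?_, fun y z hy hz hy0 hz0 hyz => ?_⟩
  · obtain ⟨x, hx⟩ := hN.1
    exact hx (hf (by rw [LinearMap.range_eq_bot.1 h, map_zero, LinearMap.zero_apply]))
  · refine hN.2 _ _ (hcomap y hy hy0) (hcomap z hz hz0) ?_
    rw [← Submodule.comap_inf, hyz, Submodule.comap_bot, LinearMap.ker_eq_bot.2 hf]

theorem IsCouniformModule.isUniformElement_toDual_ker (hN : IsCouniformModule R N)
    {f : M →ₗ[R] N} (hf : Surjective f) : IsUniformElement (toDual (LinearMap.ker f)) := by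
  have hmap : ∀ y : Submodule R M, LinearMap.ker f ≤ y → y ≠ ⊤ → y.map f ≠ ⊤ :=
    fun y hy hy0 h => hy0 (by rw [← Submodule.comap_map_eq_self hy, h, Submodule.comap_top])
  refine ⟨fun h => ?_, fun y z hy hz hy0 hz0 hyz => ?_⟩
  · obtain ⟨x, hx⟩ := hN.1
    obtain ⟨m, rfl⟩ := hf x
    exact hx (LinearMap.ker_eq_top.1 (congrArg ofDual h) ▸ rfl)
  · refine hN.2 _ _ (hmap _ (le_toDual.1 hy) hy0) (hmap _ (le_toDual.1 hz) hz0) ?_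
    rw [← Submodule.map_sup, ← _root_.ofDual_inf, hyz, ofDual_bot, Submodule.map_top,
      LinearMap.range_eq_top.2 hf]

theorem IsUniformModule.finset_inf_ne_bot (hM : IsUniformModule R M) (s : Finset ι)
    (p : ι → Submodule R M) (hp : ∀ i ∈ s, p i ≠ ⊥) : s.inf p ≠ ⊥ := by
  have hM' := hM.isUniformElement_range (f := LinearMap.id) injective_id
  simpa using hM'.inf_finset_inf_ne_bot s p (by simpa using hp)

theorem IsCouniformModule.finset_sup_ne_top (hM : IsCouniformModule R M) (s : Finset ι)
    (p : ι → Submodule R M) (hp : ∀ i ∈ s, p i ≠ ⊤) : s.sup p ≠ ⊤ := by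
  have hM' := hM.isUniformElement_toDual_ker (f := LinearMap.id) surjective_id
  have hsup := hM'.inf_finset_inf_ne_bot s (toDual ∘ p) (by simpa using hp)
  rw [LinearMap.ker_id, toDual_bot, top_inf_eq] at hsup
  exact fun h => hsup (ofDual.injective (by rw [Finset.ofDual_inf]; exact h))

theorem IsUniformModule.not_injective_sum (hM : IsUniformModule R M) {s : Finset ι}
    {f : ι → M →ₗ[R] N} (hf : ∀ i ∈ s, ¬Injective (f i)) : ¬Injective ⇑(∑ i ∈ s, f i) := by
  rw [← LinearMap.ker_eq_bot]
  refine fun h => hM.finset_inf_ne_bot s (fun i => LinearMap.ker (f i))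
    (fun i hi => mt LinearMap.ker_eq_bot.1 (hf i hi)) (eq_bot_iff.2 (h ▸ fun x hx => ?_))
  rw [LinearMap.mem_ker, LinearMap.sum_apply]
  exact Finset.sum_eq_zero fun i hi => Submodule.mem_finsetInf.1 hx i hi

theorem IsCouniformModule.not_surjective_sum (hN : IsCouniformModule R N) {s : Finset ι}
    {f : ι → M →ₗ[R] N} (hf : ∀ i ∈ s, ¬Surjective (f i)) : ¬Surjective ⇑(∑ i ∈ s, f i) := by
  rw [← LinearMap.range_eq_top]
  refine fun h => hN.finset_sup_ne_top s (fun i => LinearMap.range (f i))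
    (fun i hi => mt LinearMap.range_eq_top.1 (hf i hi)) (eq_top_iff.2 (h ▸ ?_))
  rintro _ ⟨x, rfl⟩
  rw [LinearMap.sum_apply]
  exact Submodule.sum_mem _ fun i hi => Finset.le_sup (f := fun i => LinearMap.range (f i)) hi
    (LinearMap.mem_range_self _ x)

theorem IsUniformModule.inf_comap_ne_bot (hN : IsUniformModule R N) (f : M →ₗ[R] N)
    {p : Submodule R M} (hp : p ≠ ⊥) {q : Submodule R N} (hq : q ≠ ⊥) : p ⊓ q.comap f ≠ ⊥ := by
  by_cases hpf : p.map f = ⊥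
  · rwa [inf_eq_left.2 ((LinearMap.le_ker_iff_map.2 hpf).trans (LinearMap.ker_le_comap f))]
  · obtain ⟨_, ⟨⟨x, hx, rfl⟩, hxq⟩, hx0⟩ := (Submodule.ne_bot_iff _).1 (hN.2 _ _ hpf hq)
    exact (Submodule.ne_bot_iff _).2 ⟨x, ⟨hx, hxq⟩, fun h => hx0 (by rw [h, map_zero])⟩

theorem IsCouniformModule.sup_map_ne_top (hN : IsCouniformModule R N) (f : N →ₗ[R] M)
    {p : Submodule R M} (hp : p ≠ ⊤) {q : Submodule R N} (hq : q ≠ ⊤) : p ⊔ q.map f ≠ ⊤ := by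
  by_cases hpf : p.comap f = ⊤
  · rwa [sup_eq_left.2 (Submodule.map_le_iff_le_comap.2 (hpf ▸ le_top))]
  · refine fun h => hN.2 _ _ hpf hq (eq_top_iff.2 fun x _ => ?_)
    obtain ⟨y, hy, _, ⟨z, hz, rfl⟩, hyz⟩ :=
      Submodule.mem_sup.1 (h ▸ Submodule.mem_top : f x ∈ _)
    have hxz : x - z ∈ p.comap f := by
      rw [Submodule.mem_comap, map_sub, ← hyz, add_sub_cancel_right]
      exact hy
    simpa using Submodule.add_mem_sup hxz hz

theorem IsUniformModule.injective_of_injective_comp (hN : IsUniformModule R N)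
    (hM : ∃ x : M, x ≠ 0) {f : M →ₗ[R] N} {g : N →ₗ[R] P} (h : Injective (g ∘ₗ f)) :
    Injective g := by
  obtain ⟨x, hx⟩ := hM
  have hf : LinearMap.range f ≠ ⊥ := fun hf =>
    hx (h (by simp [LinearMap.range_eq_bot.1 hf]))
  rw [← LinearMap.ker_eq_bot]
  by_contra hg
  obtain ⟨_, ⟨hy, ⟨m, rfl⟩⟩, hy0⟩ := (Submodule.ne_bot_iff _).1 (hN.2 _ _ hg hf)
  exact hy0 (by rw [h (show (g ∘ₗ f) m = (g ∘ₗ f) 0 by simpa using hy), map_zero])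

theorem IsCouniformModule.surjective_of_surjective_comp (hN : IsCouniformModule R N)
    (hP : ∃ x : P, x ≠ 0) {f : M →ₗ[R] N} {g : N →ₗ[R] P} (h : Surjective (g ∘ₗ f)) :
    Surjective f := by
  obtain ⟨z, hz⟩ := hP
  have hg : LinearMap.ker g ≠ ⊤ := fun hg => by
    obtain ⟨x, rfl⟩ := h z
    exact hz (by rw [LinearMap.comp_apply, LinearMap.ker_eq_top.1 hg, LinearMap.zero_apply])
  rw [← LinearMap.range_eq_top]
  by_contra hf
  refine hN.2 _ _ hf hg (eq_top_iff.2 fun y _ => ?_)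
  obtain ⟨x, hx⟩ := h (g y)
  have hyx : y - f x ∈ LinearMap.ker g := by simp_all
  simpa using Submodule.add_mem_sup (LinearMap.mem_range_self f x) hyx

end UniformModules

section Classes

variable {R : Type*} [Ring R] {M N P X : Type*} [AddCommGroup M] [Module R M]
  [AddCommGroup N] [Module R N] [AddCommGroup P] [Module R P] [AddCommGroup X] [Module R X]

theorem SameMonogenyClass.refl (M : Type*) [AddCommGroup M] [Module R M] :
    SameMonogenyClass R M M :=
  ⟨⟨LinearMap.id, injective_id⟩, ⟨LinearMap.id, injective_id⟩⟩

theorem SameMonogenyClass.symm (h : SameMonogenyClass R M N) : SameMonogenyClass R N M :=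
  ⟨h.2, h.1⟩

theorem SameMonogenyClass.trans (h : SameMonogenyClass R M N) (h' : SameMonogenyClass R N P) :
    SameMonogenyClass R M P := by
  obtain ⟨⟨f, hf⟩, ⟨g, hg⟩⟩ := h
  obtain ⟨⟨f', hf'⟩, ⟨g', hg'⟩⟩ := h'
  exact ⟨⟨f' ∘ₗ f, hf'.comp hf⟩, ⟨g ∘ₗ g', hg.comp hg'⟩⟩

theorem SameEpigenyClass.refl (M : Type*) [AddCommGroup M] [Module R M] :
    SameEpigenyClass R M M :=
  ⟨⟨LinearMap.id, surjective_id⟩, ⟨LinearMap.id, surjective_id⟩⟩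

theorem SameEpigenyClass.symm (h : SameEpigenyClass R M N) : SameEpigenyClass R N M :=
  ⟨h.2, h.1⟩

theorem SameEpigenyClass.trans (h : SameEpigenyClass R M N) (h' : SameEpigenyClass R N P) :
    SameEpigenyClass R M P := by
  obtain ⟨⟨f, hf⟩, ⟨g, hg⟩⟩ := h
  obtain ⟨⟨f', hf'⟩, ⟨g', hg'⟩⟩ := h'
  exact ⟨⟨f' ∘ₗ f, hf'.comp hf⟩, ⟨g ∘ₗ g', hg.comp hg'⟩⟩

theorem SameMonogenyClass.of_injective_comp (hN : IsUniformModule R N) (hM : ∃ x : M, x ≠ 0)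
    {f : M →ₗ[R] N} {g : N →ₗ[R] P} (h : Injective (g ∘ₗ f))
    (hMX : SameMonogenyClass R M X) (hPX : SameMonogenyClass R P X) :
    SameMonogenyClass R N X := by
  obtain ⟨u, hu⟩ := hPX.1
  obtain ⟨v, hv⟩ := hMX.2
  exact ⟨⟨u ∘ₗ g, hu.comp (hN.injective_of_injective_comp hM h)⟩,
    ⟨f ∘ₗ v, (Injective.of_comp (f := g) h).comp hv⟩⟩

theorem SameEpigenyClass.of_surjective_comp (hN : IsCouniformModule R N) (hP : ∃ x : P, x ≠ 0)
    {f : M →ₗ[R] N} {g : N →ₗ[R] P} (h : Surjective (g ∘ₗ f))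
    (hMX : SameEpigenyClass R M X) (hPX : SameEpigenyClass R P X) :
    SameEpigenyClass R N X := by
  obtain ⟨u, hu⟩ := hPX.1
  obtain ⟨v, hv⟩ := hMX.2
  exact ⟨⟨u ∘ₗ g, hu.comp (Surjective.of_comp (g := f) h)⟩,
    ⟨f ∘ₗ v, (hN.surjective_of_surjective_comp hP h).comp hv⟩⟩

end Classes

section PiEntry

variable {R : Type*} [Ring R] {ι κ : Type*} {A : ι → Type*} {B : κ → Type*}
  [∀ i, AddCommGroup (A i)] [∀ i, Module R (A i)]
  [∀ j, AddCommGroup (B j)] [∀ j, Module R (B j)]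

def LinearMap.piEntry [DecidableEq ι] (f : (∀ i, A i) →ₗ[R] (∀ j, B j)) (j : κ) (i : ι) :
    A i →ₗ[R] B j :=
  LinearMap.proj j ∘ₗ f ∘ₗ LinearMap.single R A i

@[simp]
theorem LinearMap.piEntry_apply [DecidableEq ι] (f : (∀ i, A i) →ₗ[R] (∀ j, B j)) (j : κ)
    (i : ι) (x : A i) : f.piEntry j i x = f (Pi.single i x) j :=
  rfl

theorem LinearMap.piEntry_sub [DecidableEq ι] (f g : (∀ i, A i) →ₗ[R] (∀ j, B j)) (j : κ)
    (i : ι) : (f - g).piEntry j i = f.piEntry j i - g.piEntry j i :=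
  rfl

theorem LinearMap.apply_eq_sum_piEntry [Fintype ι] [DecidableEq ι]
    (f : (∀ i, A i) →ₗ[R] (∀ j, B j)) (x : ∀ i, A i) (j : κ) :
    f x j = ∑ i, f.piEntry j i (x i) := by
  conv_lhs => rw [← Finset.univ_sum_single x]
  simp [Finset.sum_apply]

theorem IsUniformModule.inf_finset_inf_comap_proj_ne_bot (hA : ∀ i, IsUniformModule R (A i))
    {p : Submodule R (∀ i, A i)} (hp : p ≠ ⊥) {q : ∀ i, Submodule R (A i)}
    (hq : ∀ i, q i ≠ ⊥) (s : Finset ι) :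
    p ⊓ s.inf (fun i => (q i).comap (LinearMap.proj i)) ≠ ⊥ := by
  classical
  induction s using Finset.induction_on with
  | empty => simpa using hp
  | insert i s _ ih =>
    rw [Finset.inf_insert, inf_comm ((q i).comap _), ← inf_assoc]
    exact (hA i).inf_comap_ne_bot _ ih (hq i)

theorem IsCouniformModule.sup_finset_sup_map_single_ne_top [DecidableEq ι]
    (hA : ∀ i, IsCouniformModule R (A i)) {p : Submodule R (∀ i, A i)} (hp : p ≠ ⊤)
    {q : ∀ i, Submodule R (A i)} (hq : ∀ i, q i ≠ ⊤) (s : Finset ι) :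
    p ⊔ s.sup (fun i => (q i).map (LinearMap.single R A i)) ≠ ⊤ := by
  induction s using Finset.induction_on with
  | empty => simpa using hp
  | insert i s _ ih =>
    rw [Finset.sup_insert, sup_comm ((q i).map _), ← sup_assoc]
    exact (hA i).sup_map_ne_top _ ih (hq i)

variable [Fintype ι] [DecidableEq ι]

theorem injective_of_forall_not_injective_piEntry_id_sub (hA : ∀ i, IsUniformModule R (A i))
    (W : (∀ i, A i) →ₗ[R] (∀ i, A i))
    (hW : ∀ a b, ¬Injective ((LinearMap.id - W).piEntry a b)) : Injective W := by
  -- `W` fixes `∏ b, q b`, which meets every nonzero submodule.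
  set D := LinearMap.id - W
  set q : ∀ b, Submodule R (A b) := fun b =>
    Finset.univ.inf fun a => LinearMap.ker (D.piEntry a b)
  have hq : ∀ b, q b ≠ ⊥ := fun b => (hA b).finset_inf_ne_bot _ _ fun a _ => by
    rw [Ne, LinearMap.ker_eq_bot]; exact hW a b
  have hD : Finset.univ.inf (fun b => (q b).comap (LinearMap.proj b)) ≤ LinearMap.ker D := by
    intro x hx
    rw [Submodule.mem_finsetInf] at hx
    ext a
    rw [D.apply_eq_sum_piEntry]
    exact Finset.sum_eq_zero fun b _ =>
      Submodule.mem_finsetInf.1 (hx b (Finset.mem_univ b)) a (Finset.mem_univ a)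
  rw [← LinearMap.ker_eq_bot]
  by_contra hW0
  refine IsUniformModule.inf_finset_inf_comap_proj_ne_bot hA hW0 hq Finset.univ
    (eq_bot_iff.2 fun x ⟨hxW, hxq⟩ => ?_)
  have hDx : x - W x = 0 := hD hxq
  rw [LinearMap.mem_ker.1 hxW, sub_zero] at hDx
  exact (Submodule.mem_bot R).2 hDx

theorem surjective_of_forall_not_surjective_piEntry_id_sub
    (hA : ∀ i, IsCouniformModule R (A i)) (W : (∀ i, A i) →ₗ[R] (∀ i, A i))
    (hW : ∀ a b, ¬Surjective ((LinearMap.id - W).piEntry a b)) : Surjective W := by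
  -- `1 - W` maps into `E`, which is superfluous in `∏ a, A a`.
  set D := LinearMap.id - W
  set q : ∀ a, Submodule R (A a) := fun a =>
    Finset.univ.sup fun b => LinearMap.range (D.piEntry a b)
  have hq : ∀ a, q a ≠ ⊤ := fun a => (hA a).finset_sup_ne_top _ _ fun b _ => by
    rw [Ne, LinearMap.range_eq_top]; exact hW a b
  set E := Finset.univ.sup fun a => (q a).map (LinearMap.single R A a)
  have hD : LinearMap.range D ≤ E := by
    rintro _ ⟨x, rfl⟩
    rw [← Finset.univ_sum_single (D x)]
    refine Submodule.sum_mem _ fun a _ => Finset.le_sup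
      (f := fun a => (q a).map (LinearMap.single R A a)) (Finset.mem_univ a)
      (Submodule.mem_map_of_mem ?_)
    rw [D.apply_eq_sum_piEntry]
    exact Submodule.sum_mem _ fun b _ => Finset.le_sup
      (f := fun b => LinearMap.range (D.piEntry a b)) (Finset.mem_univ b)
      (LinearMap.mem_range_self _ _)
  rw [← LinearMap.range_eq_top]
  by_contra hW0
  refine IsCouniformModule.sup_finset_sup_map_single_ne_top hA hW0 hq Finset.univ
    (eq_top_iff.2 fun y _ => ?_)
  have hy : y = W y + D y := by simp [D]
  rw [hy]
  exact Submodule.add_mem_sup (LinearMap.mem_range_self W y) (hD (LinearMap.mem_range_self D y))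

end PiEntry

section FiniteProducts

variable {R : Type*} [Ring R] {ι κ M : Type*} [AddCommGroup M] [Module R M]
  {A : κ → Type*} {B : ι → Type*} [∀ a, AddCommGroup (A a)] [∀ a, Module R (A a)]
  [∀ b, AddCommGroup (B b)] [∀ b, Module R (B b)]

theorem iSupIndep_range_comp_single [DecidableEq κ] {f : (∀ a, A a) →ₗ[R] M}
    (hf : Injective f) : iSupIndep fun a => LinearMap.range (f ∘ₗ LinearMap.single R A a) := by
  have hsingle : iSupIndep fun a => LinearMap.range (LinearMap.single R A a) := fun a => by
    simpa using LinearMap.disjoint_single_single R A {a} {a}ᶜ (by simp)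
  simpa only [LinearMap.range_comp] using LinearMap.iSupIndep_map f hf hsingle

theorem iSupIndep_toDual_ker_proj_comp {f : M →ₗ[R] ∀ a, A a} (hf : Surjective f) :
    iSupIndep fun a => toDual (LinearMap.ker (LinearMap.proj a ∘ₗ f)) := by
  classical
  intro a
  simp only [← toDual_iInf, disjoint_toDual_iff, codisjoint_iff, eq_top_iff]
  intro x _
  obtain ⟨y, hy⟩ := hf (Pi.single a (f x a))
  have hxy : x - y ∈ LinearMap.ker (LinearMap.proj a ∘ₗ f) := by simp [hy]
  have hy' : y ∈ ⨅ b, ⨅ (_ : b ≠ a), LinearMap.ker (LinearMap.proj b ∘ₗ f) := by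
    simp only [Submodule.mem_iInf, LinearMap.mem_ker, LinearMap.comp_apply, LinearMap.proj_apply,
      hy]
    exact fun b hb => Pi.single_eq_of_ne hb _
  simpa using Submodule.add_mem_sup hxy hy'

variable [Fintype κ] [Fintype ι] [DecidableEq κ] [DecidableEq ι]

theorem card_le_card_of_injective_pi (hA : ∀ a, ∃ x : A a, x ≠ 0)
    (hB : ∀ b, IsUniformModule R (B b)) {f : (∀ a, A a) →ₗ[R] (∀ b, B b)} (hf : Injective f) :
    Fintype.card κ ≤ Fintype.card ι := by
  have hv : ∀ a, LinearMap.range (f ∘ₗ LinearMap.single R A a) ≠ ⊥ := fun a h => by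
    obtain ⟨x, hx⟩ := hA a
    refine hx (hf.comp (Pi.single_injective a) ?_)
    simpa using LinearMap.congr_fun (LinearMap.range_eq_bot.1 h) x
  have hcard := ((iSupIndep_range_comp_single (f := LinearMap.id) injective_id).supIndep' univ
    |>.card_le_card_of_sup_le (fun b _ => (hB b).isUniformElement_range (Pi.single_injective b))
      ((iSupIndep_range_comp_single hf).supIndep' univ) (fun a _ => hv a)
      (by simp [Finset.sup_univ_eq_iSup, LinearMap.iSup_range_single]))
  simpa using hcard

theorem card_le_card_of_surjective_pi (hA : ∀ a, ∃ x : A a, x ≠ 0)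
    (hB : ∀ b, IsCouniformModule R (B b)) {f : (∀ b, B b) →ₗ[R] (∀ a, A a)} (hf : Surjective f) :
    Fintype.card κ ≤ Fintype.card ι := by
  have hv : ∀ a, toDual (LinearMap.ker (LinearMap.proj a ∘ₗ f)) ≠ ⊥ := fun a h => by
    obtain ⟨x, hx⟩ := hA a
    have hsurj : Surjective (LinearMap.proj (R := R) (φ := A) a ∘ₗ f) :=
      (LinearMap.proj_surjective (R := R) a).comp hf
    obtain ⟨y, rfl⟩ := hsurj x
    exact hx (by rw [LinearMap.ker_eq_top.1 (congrArg ofDual h), LinearMap.zero_apply])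
  have hcard := ((iSupIndep_toDual_ker_proj_comp (f := LinearMap.id) surjective_id).supIndep' univ
    |>.card_le_card_of_sup_le
      (fun b _ => (hB b).isUniformElement_toDual_ker (LinearMap.proj_surjective b))
      ((iSupIndep_toDual_ker_proj_comp hf).supIndep' univ) (fun a _ => hv a)
      (by simp [Finset.sup_univ_eq_iSup, ← toDual_iInf, LinearMap.iInf_ker_proj]))
  simpa using hcard

end FiniteProducts

section Slender

variable {R : Type*} [Ring R] {ι M : Type*} [AddCommGroup M] [Module R M] {A : ι → Type*}
  [∀ i, AddCommGroup (A i)] [∀ i, Module R (A i)]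

theorem exists_linearMap_apply_single_eq (x : ℕ → ∀ i, A i)
    (hx : ∀ i, ∃ n, ∀ k ≥ n, x k i = 0) :
    ∃ g : (ℕ → R) →ₗ[R] (∀ i, A i), ∀ k, g (Pi.single k 1) = x k := by
  choose n hn using hx
  -- `g r = ∑ k, r k • x k`, a finite sum in each coordinate.
  refine ⟨LinearMap.pi fun i => ∑ k ∈ Finset.range (n i), (LinearMap.proj k).smulRight (x k i),
    fun k => funext fun i => ?_⟩
  simp only [LinearMap.pi_apply, LinearMap.sum_apply, LinearMap.smulRight_apply,
    LinearMap.proj_apply, Pi.single_apply, ite_smul, one_smul, zero_smul, Finset.sum_ite_eq',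
    Finset.mem_range]
  split_ifs with h
  · rfl
  · exact (hn i k (not_lt.1 h)).symm

theorem IsSlender.exists_finset_apply_eq_zero (hM : IsSlender R M) [Countable ι]
    (f : (∀ i, A i) →ₗ[R] M) : ∃ s : Finset ι, ∀ x, (∀ i ∈ s, x i = 0) → f x = 0 := by
  classical
  rcases finite_or_infinite ι with _ | _
  · have := Fintype.ofFinite ι
    refine ⟨Finset.univ, fun x hx => ?_⟩
    rw [show x = 0 from funext fun i => hx i (Finset.mem_univ i), map_zero]
  obtain ⟨_⟩ : Nonempty (Denumerable ι) := nonempty_denumerable_iff.2 ⟨‹_›, ‹_›⟩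
  set e : ℕ ≃ ι := (Denumerable.eqv ι).symm
  -- Otherwise pick `x k` vanishing on `e 0, …, e (k - 1)` with `f (x k) ≠ 0`; the map
  -- `r ↦ ∑ k, r k • x k` contradicts slenderness.
  by_contra! h
  choose x hx0 hfx using h
  obtain ⟨g, hg⟩ := exists_linearMap_apply_single_eq (R := R)
    (fun k => x ((Finset.range k).map e.toEmbedding)) fun i => ⟨e.symm i + 1, fun k hk =>
      hx0 _ i (Finset.mem_map_equiv.2 (Finset.mem_range.2 (by omega)))⟩
  obtain ⟨n, hn⟩ := hM (f ∘ₗ g)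
  exact hfx _ (by simpa [hg] using hn n le_rfl)

theorem IsSlender.exists_finset_apply_eq_sum (hM : IsSlender R M) [Countable ι]
    [DecidableEq ι] (f : (∀ i, A i) →ₗ[R] M) :
    ∃ s : Finset ι, ∀ t, s ⊆ t → ∀ x, f x = ∑ i ∈ t, f (Pi.single i (x i)) := by
  obtain ⟨s, hs⟩ := hM.exists_finset_apply_eq_zero f
  refine ⟨s, fun t hst x => ?_⟩
  rw [← map_sum, ← sub_eq_zero, ← map_sub]
  exact hs _ fun i hi => by simp [Finset.sum_apply, hst hi]

end Slender

section Submatrix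

variable {R : Type*} [Ring R] {ι κ : Type*} [DecidableEq ι]
  {A : ι → Type*} {B : κ → Type*} [∀ i, AddCommGroup (A i)] [∀ i, Module R (A i)]
  [∀ j, AddCommGroup (B j)] [∀ j, Module R (B j)]

def LinearMap.piSubmatrix (f : (∀ i, A i) →ₗ[R] (∀ j, B j)) (S : Finset ι) (T : Finset κ) :
    (∀ a : S, A a) →ₗ[R] (∀ t : T, B t) :=
  LinearMap.pi fun t => ∑ a : S, f.piEntry t a ∘ₗ LinearMap.proj a

theorem LinearMap.piEntry_piSubmatrix (f : (∀ i, A i) →ₗ[R] (∀ j, B j)) (S : Finset ι)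
    (T : Finset κ) (t : T) (a : S) : (f.piSubmatrix S T).piEntry t a = f.piEntry t a := by
  ext x
  rw [piEntry_apply, piSubmatrix, pi_apply, sum_apply,
    Finset.sum_eq_single a (fun b _ hb => by simp [Pi.single_eq_of_ne hb]) (by simp)]
  simp

theorem LinearMap.piEntry_comp {μ : Type*} [Fintype κ] [DecidableEq κ] {C : μ → Type*}
    [∀ k, AddCommGroup (C k)] [∀ k, Module R (C k)]
    (g : (∀ j, B j) →ₗ[R] (∀ k, C k)) (f : (∀ i, A i) →ₗ[R] (∀ j, B j)) (k : μ) (i : ι) :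
    (g ∘ₗ f).piEntry k i = ∑ j, g.piEntry k j ∘ₗ f.piEntry j i := by
  ext x
  simp [g.apply_eq_sum_piEntry (f _), LinearMap.sum_apply]

theorem LinearEquiv.piEntry_id_sub_piSubmatrix_comp [DecidableEq κ]
    (φ : (∀ i, A i) ≃ₗ[R] (∀ j, B j)) {G : ι → Finset κ}
    (hG : ∀ i t, G i ⊆ t → ∀ y, φ.symm y i = ∑ j ∈ t, φ.symm (Pi.single j (y j)) i)
    (S : Finset ι) (T : Finset κ) (a b : S) :
    (LinearMap.id - φ.symm.toLinearMap.piSubmatrix T S ∘ₗ φ.toLinearMap.piSubmatrix S T).piEntry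
      a b = ∑ j ∈ G a \ T, φ.symm.toLinearMap.piEntry a j ∘ₗ φ.toLinearMap.piEntry j b := by
  ext x
  have hid : (Pi.single b x : ∀ c : S, A c) a = (Pi.single (b : ι) x : ∀ i, A i) a := by
    by_cases hab : a = b
    · subst hab; simp
    · rw [Pi.single_eq_of_ne hab, Pi.single_eq_of_ne (Subtype.val_injective.ne hab)]
  have hsum := hG a (G a ∪ T) Finset.subset_union_left (φ (Pi.single (b : ι) x))
  rw [LinearEquiv.symm_apply_apply] at hsum
  rw [LinearMap.piEntry_sub, LinearMap.sub_apply, LinearMap.piEntry_comp, LinearMap.sum_apply,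
    LinearMap.piEntry_apply, LinearMap.id_apply, hid, hsum, ← Finset.union_sdiff_right,
    Finset.sum_sdiff_eq_sub Finset.subset_union_right, ← Finset.sum_coe_sort T]
  simp [LinearMap.piEntry_piSubmatrix]

end Submatrix

theorem Finset.not_of_mem_sdiff_filter_biUnion {α β : Type*} [DecidableEq β] {p : β → Prop}
    [DecidablePred p] {s : Finset α} {G : α → Finset β} {a : α} (ha : a ∈ s) {b : β}
    (hb : b ∈ G a \ (s.biUnion G).filter p) : ¬p b := fun hp =>
  (mem_sdiff.1 hb).2 (mem_filter.2 ⟨mem_biUnion.2 ⟨a, ha, (mem_sdiff.1 hb).1⟩, hp⟩)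

section Counting

variable {R : Type*} [Ring R] {I J X : Type*} [DecidableEq I] [DecidableEq J] [Countable J]
  {A : I → Type*} {B : J → Type*} [∀ i, AddCommGroup (A i)] [∀ i, Module R (A i)]
  [∀ j, AddCommGroup (B j)] [∀ j, Module R (B j)] [AddCommGroup X] [Module R X]

theorem exists_card_le_of_sameMonogenyClass (φ : (∀ i, A i) ≃ₗ[R] (∀ j, B j))
    (hAs : ∀ i, IsSlender R (A i)) (hA : ∀ i, IsUniformModule R (A i))
    (hB : ∀ j, IsUniformModule R (B j)) (S : Finset I)
    (hS : ∀ i ∈ S, SameMonogenyClass R (A i) X) :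
    ∃ T : Finset J, (∀ j ∈ T, SameMonogenyClass R (B j) X) ∧ #S ≤ #T := by
  classical
  choose G hG using fun i =>
    (hAs i).exists_finset_apply_eq_sum (LinearMap.proj i ∘ₗ φ.symm.toLinearMap)
  set T := (S.biUnion G).filter fun j => SameMonogenyClass R (B j) X
  have hW : Injective (φ.symm.toLinearMap.piSubmatrix T S ∘ₗ φ.toLinearMap.piSubmatrix S T) := by
    refine injective_of_forall_not_injective_piEntry_id_sub (A := fun a : S => A a)
      (fun a => hA a) _ fun a b => ?_
    rw [φ.piEntry_id_sub_piSubmatrix_comp hG]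
    exact (hA b).not_injective_sum fun j hj h => Finset.not_of_mem_sdiff_filter_biUnion a.2 hj
      (SameMonogenyClass.of_injective_comp (hB j) (hA b).1 h (hS b b.2) (hS a a.2))
  have hΦ : Injective (φ.toLinearMap.piSubmatrix S T) :=
    Injective.of_comp (f := φ.symm.toLinearMap.piSubmatrix T S) hW
  refine ⟨T, fun j hj => (Finset.mem_filter.1 hj).2, ?_⟩
  simpa using card_le_card_of_injective_pi (fun a : S => (hA a).1) (fun t : T => hB t) hΦ

theorem exists_card_le_of_sameEpigenyClass (φ : (∀ i, A i) ≃ₗ[R] (∀ j, B j))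
    (hAs : ∀ i, IsSlender R (A i)) (hA : ∀ i, IsCouniformModule R (A i))
    (hB : ∀ j, IsCouniformModule R (B j)) (S : Finset I)
    (hS : ∀ i ∈ S, SameEpigenyClass R (A i) X) :
    ∃ T : Finset J, (∀ j ∈ T, SameEpigenyClass R (B j) X) ∧ #S ≤ #T := by
  classical
  choose G hG using fun i =>
    (hAs i).exists_finset_apply_eq_sum (LinearMap.proj i ∘ₗ φ.symm.toLinearMap)
  set T := (S.biUnion G).filter fun j => SameEpigenyClass R (B j) X
  have hW : Surjective (φ.symm.toLinearMap.piSubmatrix T S ∘ₗ φ.toLinearMap.piSubmatrix S T) := by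
    refine surjective_of_forall_not_surjective_piEntry_id_sub (A := fun a : S => A a)
      (fun a => hA a) _ fun a b => ?_
    rw [φ.piEntry_id_sub_piSubmatrix_comp hG]
    exact (hA a).not_surjective_sum fun j hj h => Finset.not_of_mem_sdiff_filter_biUnion a.2 hj
      (SameEpigenyClass.of_surjective_comp (hB j) (hA a).1 h (hS b b.2) (hS a a.2))
  have hΨ : Surjective (φ.symm.toLinearMap.piSubmatrix T S) :=
    Surjective.of_comp (g := φ.toLinearMap.piSubmatrix S T) hW
  refine ⟨T, fun j hj => (Finset.mem_filter.1 hj).2, ?_⟩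
  simpa using card_le_card_of_surjective_pi (fun a : S => (hA a).1) (fun t : T => hB t) hΨ

end Counting

section Matching

theorem Infinite.exists_finset_forall_card_lt (X Y : Type*) [Infinite X] [Finite Y] :
    ∃ S : Finset X, ∀ T : Finset Y, #T < #S := by
  have := Fintype.ofFinite Y
  obtain ⟨S, hS⟩ := Infinite.exists_subset_card_eq X (Fintype.card Y + 1)
  exact ⟨S, fun T => hS ▸ Nat.lt_succ_of_le T.card_le_univ⟩

theorem nonempty_equiv_of_forall_exists_card_le {X Y : Type*} [Countable X] [Countable Y]
    (hXY : ∀ S : Finset X, ∃ T : Finset Y, #S ≤ #T)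
    (hYX : ∀ T : Finset Y, ∃ S : Finset X, #T ≤ #S) : Nonempty (X ≃ Y) := by
  rcases finite_or_infinite X with _ | _ <;> rcases finite_or_infinite Y with _ | _
  · have := Fintype.ofFinite X
    have := Fintype.ofFinite Y
    obtain ⟨T, hT⟩ := hXY univ
    obtain ⟨S, hS⟩ := hYX univ
    exact ⟨Fintype.equivOfCardEq
      (le_antisymm (hT.trans T.card_le_univ) (hS.trans S.card_le_univ))⟩
  · obtain ⟨T, hT⟩ := Infinite.exists_finset_forall_card_lt Y X
    obtain ⟨S, hS⟩ := hYX T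
    exact absurd hS (not_le.2 (hT S))
  · obtain ⟨S, hS⟩ := Infinite.exists_finset_forall_card_lt X Y
    obtain ⟨T, hT⟩ := hXY S
    exact absurd hT (not_le.2 (hS T))
  · obtain ⟨_⟩ : Nonempty (Denumerable X) := nonempty_denumerable_iff.2 ⟨‹_›, ‹_›⟩
    obtain ⟨_⟩ : Nonempty (Denumerable Y) := nonempty_denumerable_iff.2 ⟨‹_›, ‹_›⟩
    exact ⟨(Denumerable.eqv X).trans (Denumerable.eqv Y).symm⟩

theorem exists_finset_subtype_card_le {I J : Type*} {p : I → Prop} {q : J → Prop}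
    (h : ∀ S : Finset I, (∀ i ∈ S, p i) → ∃ T : Finset J, (∀ j ∈ T, q j) ∧ #S ≤ #T)
    (S : Finset {i // p i}) : ∃ T : Finset {j // q j}, #S ≤ #T := by
  classical
  obtain ⟨T, hT, hST⟩ := h (S.map (Function.Embedding.subtype p)) fun i hi => by
    obtain ⟨a, -, rfl⟩ := mem_map.1 hi
    exact a.2
  exact ⟨T.subtype q, by rwa [card_subtype, filter_true_of_mem hT, ← card_map]⟩

theorem exists_equiv_of_equivalence_sum {I J : Type*} {r : I ⊕ J → I ⊕ J → Prop}
    (hr : Equivalence r)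
    (h : ∀ x, Nonempty ({i // r (.inl i) x} ≃ {j // r (.inr j) x})) :
    ∃ σ : I ≃ J, ∀ i, r (.inl i) (.inr (σ i)) := by
  let s : Setoid (I ⊕ J) := ⟨r, hr⟩
  have hfib : ∀ c : Quotient s, Nonempty
      ({i // Quotient.mk s (.inl i) = c} ≃ {j // Quotient.mk s (.inr j) = c}) := by
    refine Quotient.ind fun x => ?_
    obtain ⟨e⟩ := h x
    exact ⟨(Equiv.subtypeEquivRight fun i => Quotient.eq (r := s)).trans
      (e.trans (Equiv.subtypeEquivRight fun j => (Quotient.eq (r := s)).symm))⟩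
  let e := fun c => (hfib c).some
  refine ⟨(Equiv.sigmaFiberEquiv _).symm.trans
    ((Equiv.sigmaCongrRight e).trans (Equiv.sigmaFiberEquiv _)), fun i => ?_⟩
  exact hr.symm (Quotient.exact (e (Quotient.mk s (.inl i)) ⟨i, rfl⟩).2)

end Matching

section SumRelations

variable (R : Type*) [Ring R] {I J : Type*} (A : I → Type*) (B : J → Type*)
  [∀ i, AddCommGroup (A i)] [∀ i, Module R (A i)]
  [∀ j, AddCommGroup (B j)] [∀ j, Module R (B j)]

def SameMonogenyClassSum : I ⊕ J → I ⊕ J → Prop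
  | .inl i, .inl i' => SameMonogenyClass R (A i) (A i')
  | .inl i, .inr j => SameMonogenyClass R (A i) (B j)
  | .inr j, .inl i => SameMonogenyClass R (B j) (A i)
  | .inr j, .inr j' => SameMonogenyClass R (B j) (B j')

def SameEpigenyClassSum : I ⊕ J → I ⊕ J → Prop
  | .inl i, .inl i' => SameEpigenyClass R (A i) (A i')
  | .inl i, .inr j => SameEpigenyClass R (A i) (B j)
  | .inr j, .inl i => SameEpigenyClass R (B j) (A i)
  | .inr j, .inr j' => SameEpigenyClass R (B j) (B j')

theorem equivalence_sameMonogenyClassSum : Equivalence (SameMonogenyClassSum R A B) where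
  refl := by rintro (i | j) <;> exact .refl _
  symm := by rintro (i | j) (i' | j') h <;> exact h.symm
  trans := by rintro (i | j) (i' | j') (i'' | j'') h h' <;> exact h.trans h'

theorem equivalence_sameEpigenyClassSum : Equivalence (SameEpigenyClassSum R A B) where
  refl := by rintro (i | j) <;> exact .refl _
  symm := by rintro (i | j) (i' | j') h <;> exact h.symm
  trans := by rintro (i | j) (i' | j') (i'' | j'') h h' <;> exact h.trans h'

variable {R A B} [Countable I] [Countable J]

theorem exists_equiv_sameMonogenyClass (φ : (∀ i, A i) ≃ₗ[R] (∀ j, B j))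
    (hAs : ∀ i, IsSlender R (A i)) (hBs : ∀ j, IsSlender R (B j))
    (hA : ∀ i, IsUniformModule R (A i)) (hB : ∀ j, IsUniformModule R (B j)) :
    ∃ σ : I ≃ J, ∀ i, SameMonogenyClass R (A i) (B (σ i)) := by
  classical
  refine exists_equiv_of_equivalence_sum (equivalence_sameMonogenyClassSum R A B) fun x => ?_
  rcases x with i₀ | j₀ <;>
  exact nonempty_equiv_of_forall_exists_card_le
    (exists_finset_subtype_card_le (exists_card_le_of_sameMonogenyClass φ hAs hA hB))
    (exists_finset_subtype_card_le (exists_card_le_of_sameMonogenyClass φ.symm hBs hB hA))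

theorem exists_equiv_sameEpigenyClass (φ : (∀ i, A i) ≃ₗ[R] (∀ j, B j))
    (hAs : ∀ i, IsSlender R (A i)) (hBs : ∀ j, IsSlender R (B j))
    (hA : ∀ i, IsCouniformModule R (A i)) (hB : ∀ j, IsCouniformModule R (B j)) :
    ∃ τ : I ≃ J, ∀ i, SameEpigenyClass R (A i) (B (τ i)) := by
  classical
  refine exists_equiv_of_equivalence_sum (equivalence_sameEpigenyClassSum R A B) fun x => ?_
  rcases x with i₀ | j₀ <;>
  exact nonempty_equiv_of_forall_exists_card_le
    (exists_finset_subtype_card_le (exists_card_le_of_sameEpigenyClass φ hAs hA hB))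
    (exists_finset_subtype_card_le (exists_card_le_of_sameEpigenyClass φ.symm hBs hB hA))

end SumRelations

/-- For countable families of slender biuniform modules, an isomorphism of the direct
products yields bijections matching the monogeny classes and the epigeny classes. -/
theorem sameClasses_of_direct_products_isomorphic_slender_biuniform
    {R : Type*} [Ring R] {I J : Type*} [Countable I] [Countable J]
    (A : I → Type*) (B : J → Type*)
    [∀ i, AddCommGroup (A i)] [∀ i, Module R (A i)]
    [∀ j, AddCommGroup (B j)] [∀ j, Module R (B j)]
    (hAs : ∀ i, IsSlender R (A i)) (hAb : ∀ i, IsBiuniformModule R (A i))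
    (hBs : ∀ j, IsSlender R (B j)) (hBb : ∀ j, IsBiuniformModule R (B j))
    (h : Nonempty (((i : I) → A i) ≃ₗ[R] ((j : J) → B j))) :
    ∃ σ τ : I ≃ J,
      (∀ i, SameMonogenyClass R (A i) (B (σ i))) ∧
      (∀ i, SameEpigenyClass R (A i) (B (τ i))) := by
  obtain ⟨φ⟩ := h
  obtain ⟨σ, hσ⟩ :=
    exists_equiv_sameMonogenyClass φ hAs hBs (fun i => (hAb i).1) fun j => (hBb j).1
  obtain ⟨τ, hτ⟩ :=
    exists_equiv_sameEpigenyClass φ hAs hBs (fun i => (hAb i).2) fun j => (hBb j).2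
  exact ⟨σ, τ, hσ, hτ⟩
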